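/- Let (X,σ) be a GCB-space and Γ a group of σ-isometries of X acting discretely and freely. Then for every f ∈ F, the metric induced by f on Loc-Geod_σ(Γ\X) is complete; moreover Loc-Geod_σ(Γ\X) is a closed subset of Loc-Geod(Γ\X). -/

import Mathlib

open Filter Metric Set MeasureTheory Topology
open scoped ENNReal NNReal

noncomputable section

namespace Paper

variable {X : Type*} [MetricSpace X]

/-- The Gromov product `(y,z)_x`. -/
def gromov (x y z : X) : ℝ := (dist x y + dist x z - dist y z) / 2

/-- `δ`-hyperbolicity via the four points condition on Gromov products. -/
def IsHyperbolic (X : Type*) [MetricSpace X] (δ : ℝ) : Prop :=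
  ∀ w x y z : X, min (gromov w x y) (gromov w y z) - δ ≤ gromov w x z

/-- `X` is `P₀`-packed at scale `r₀`: every closed ball of radius `3r₀` contains at most `P₀`
points that are pairwise `2r₀`-separated. -/
def IsPacked (X : Type*) [MetricSpace X] (P₀ : ℕ) (r₀ : ℝ) : Prop :=
  ∀ (x : X) (s : Finset X), (↑s : Set X) ⊆ Metric.closedBall x (3 * r₀) →
    (∀ y ∈ s, ∀ z ∈ s, y ≠ z → 2 * r₀ < dist y z) → s.card ≤ P₀

/-- A `σ`-geodesic line: an isometric line all whose subsegments are `σ`-geodesics. -/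
structure IsSigmaGeodLine (σ : X → X → ℝ → X) (γ : ℝ → X) : Prop where
  isom : Isometry γ
  seg : ∀ s t : ℝ, s ≤ t → ∀ l ∈ Set.Icc (0:ℝ) 1, σ (γ s) (γ t) l = γ (s + l * (t - s))

/-- `(X,σ)` is a GCB-space: `σ` is a convex, consistent, reversible, geodesically complete
geodesic bicombing on the (complete) metric space `X`. -/
structure IsGCB (σ : X → X → ℝ → X) : Prop where
  source : ∀ x y : X, σ x y 0 = x
  target : ∀ x y : X, σ x y 1 = y
  propor : ∀ x y : X, ∀ s ∈ Set.Icc (0:ℝ) 1, ∀ t ∈ Set.Icc (0:ℝ) 1,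
    dist (σ x y s) (σ x y t) = |s - t| * dist x y
  convex : ∀ x y x' y' : X, ConvexOn ℝ (Set.Icc (0:ℝ) 1) fun t => dist (σ x y t) (σ x' y' t)
  consistent : ∀ x y : X, ∀ s t : ℝ, 0 ≤ s → s ≤ t → t ≤ 1 → ∀ l ∈ Set.Icc (0:ℝ) 1,
    σ (σ x y s) (σ x y t) l = σ x y ((1 - l) * s + l * t)
  reversible : ∀ x y : X, ∀ t ∈ Set.Icc (0:ℝ) 1, σ x y t = σ y x (1 - t)
  geodComplete : ∀ x y : X, ∃ γ : ℝ → X, IsSigmaGeodLine σ γ ∧ ∃ a b : ℝ, a ≤ b ∧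
    b - a = dist x y ∧ ∀ l ∈ Set.Icc (0:ℝ) 1, γ (a + l * (b - a)) = σ x y l

section Group

variable (G : Type*) [Group G] [MulAction G X]

/-- A group of isometries is discrete if orbits meet balls in finitely many elements. -/
def DiscreteAction (X : Type*) [MetricSpace X] [MulAction G X] : Prop :=
  ∀ (x : X) (R : ℝ), {g : G | dist x (g • x) ≤ R}.Finite

/-- The action is free. -/
def FreeAction (X : Type*) [MetricSpace X] [MulAction G X] : Prop :=
  ∀ (g : G) (x : X), g • x = x → g = 1

/-- `Γ` acts by `σ`-isometries. -/
def SigmaEquivariant (σ : X → X → ℝ → X) : Prop :=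
  ∀ (g : G) (x y : X), ∀ t ∈ Set.Icc (0:ℝ) 1, g • σ x y t = σ (g • x) (g • y) t

/-- The number of orbit points in the open ball `B(x,T)`. -/
def orbitCount (x : X) (T : ℝ) : ℕ :=
  Nat.card {y : X // y ∈ MulAction.orbit G x ∧ dist x y < T}

/-- The critical exponent `h_Γ = limsup (1/T) log #(Γx ∩ B(x,T))`. -/
def critExp (x : X) : EReal :=
  limsup (fun T : ℝ => ((Real.log (orbitCount G x T) / T : ℝ) : EReal)) atTop

end Group

/-- The quotient space `Γ\X`. -/
def QuotX (G : Type*) (X : Type*) [Group G] [MulAction G X] [MetricSpace X] :=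
  Quotient (MulAction.orbitRel G X)

section Quot

variable (G : Type*) [Group G] [MulAction G X] [IsIsometricSMul G X]

private lemma bddb (x y : X) : BddBelow (Set.range fun g : G => dist x (g • y)) :=
  ⟨0, by rintro _ ⟨g, rfl⟩; exact dist_nonneg⟩

/-- The quotient distance `d(πx,πy) = inf_g d(x, g·y)`. -/
def qdist (a b : QuotX G X) : ℝ :=
  ⨅ g : G, dist (Quotient.out a) (g • Quotient.out b)

private lemma qdist_self (a : QuotX G X) : qdist G a a = 0 := by
  refine le_antisymm ?_ (le_ciInf fun g => dist_nonneg)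
  have h := ciInf_le (bddb G (Quotient.out a) (Quotient.out a)) (1 : G)
  simpa [qdist] using h

private lemma qdist_comm_le (a b : QuotX G X) : qdist G a b ≤ qdist G b a := by
  refine le_ciInf fun g => ?_
  have h := ciInf_le (bddb G (Quotient.out a) (Quotient.out b)) g⁻¹
  refine h.trans_eq ?_
  rw [← dist_smul g (Quotient.out a) (g⁻¹ • Quotient.out b), smul_inv_smul, dist_comm]

private lemma qdist_triangle (a b c : QuotX G X) :
    qdist G a c ≤ qdist G a b + qdist G b c := by
  refine le_of_forall_pos_le_add fun ε hε => ?_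
  have h1 : qdist G a b < qdist G a b + ε / 2 := lt_add_of_pos_right _ (half_pos hε)
  have h2 : qdist G b c < qdist G b c + ε / 2 := lt_add_of_pos_right _ (half_pos hε)
  obtain ⟨g, hg⟩ := exists_lt_of_ciInf_lt h1
  obtain ⟨h, hh⟩ := exists_lt_of_ciInf_lt h2
  have key : qdist G a c ≤ dist (Quotient.out a) ((g * h) • Quotient.out c) :=
    ciInf_le (bddb G _ _) (g * h)
  have e : dist (g • Quotient.out b) ((g * h) • Quotient.out c)
      = dist (Quotient.out b) (h • Quotient.out c) := by
    rw [mul_smul, dist_smul]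
  have tri := dist_triangle (Quotient.out a) (g • Quotient.out b) ((g * h) • Quotient.out c)
  rw [e] at tri
  have := key.trans tri
  linarith

/-- The quotient pseudometric on `Γ\X` (a genuine metric whenever the action is discrete
and free). -/
instance : PseudoMetricSpace (QuotX G X) where
  dist := qdist G
  dist_self := qdist_self G
  dist_comm a b := le_antisymm (qdist_comm_le G a b) (qdist_comm_le G b a)
  dist_triangle := qdist_triangle G

/-- The projection `π : X → Γ\X`. -/
def projQ (x : X) : QuotX G X := Quotient.mk (MulAction.orbitRel G X) x

lemma projQ_dist_le (x y : X) : dist (projQ G x) (projQ G y) ≤ dist x y := by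
  obtain ⟨k, hk⟩ := MulAction.mem_orbit_iff.mp
    ((MulAction.orbitRel_apply (G := G)).mp (Quotient.mk_out (s := MulAction.orbitRel G X) x))
  obtain ⟨l, hl⟩ := MulAction.mem_orbit_iff.mp
    ((MulAction.orbitRel_apply (G := G)).mp (Quotient.mk_out (s := MulAction.orbitRel G X) y))
  have h1 : dist (projQ G x) (projQ G y)
      ≤ dist (Quotient.out (projQ G x)) ((k * l⁻¹) • Quotient.out (projQ G y)) :=
    ciInf_le (bddb G _ _) (k * l⁻¹)
  have hk2 : Quotient.out (projQ G x) = k • x := hk.symm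
  have hl2 : Quotient.out (projQ G y) = l • y := hl.symm
  rw [hk2, hl2, smul_smul, inv_mul_cancel_right, dist_smul] at h1
  exact h1

/-- `π` as a continuous (1-Lipschitz) map. -/
def projCM : C(X, QuotX G X) :=
  ⟨projQ G, (LipschitzWith.of_dist_le_mul (K := 1) fun a b => by
    simpa using projQ_dist_le G a b).continuous⟩

end Quot

end Paper

namespace Paper

variable {X : Type*} [MetricSpace X]

/-- The space of local geodesic lines of a (pseudo)metric space `Y`, as a subset of the space
of continuous maps `ℝ → Y` (with the topology of uniform convergence on compact sets). -/
def LocGeodSet (Y : Type*) [PseudoMetricSpace Y] : Set C(ℝ, Y) :=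
  {γ | ∀ t : ℝ, ∃ ε > 0, ∀ s ∈ Set.Icc (t - ε) (t + ε), ∀ u ∈ Set.Icc (t - ε) (t + ε),
    dist (γ s) (γ u) = |s - u|}

/-- The set of (parametrized) `σ`-geodesic lines of `X`. -/
def SigmaGeodLines (σ : X → X → ℝ → X) : Set C(ℝ, X) := {γ | IsSigmaGeodLine σ ⇑γ}

section Proj

variable (G : Type*) [Group G] [MulAction G X] [IsIsometricSMul G X]

/-- Post-composition with the projection `π : X → Γ\X`. -/
def projComp (γ : C(ℝ, X)) : C(ℝ, QuotX G X) := (projCM G).comp γ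

/-- The space `Loc-Geod_σ(Γ\X)`: the image of the `σ`-geodesic lines of `X` under `Π`. -/
def LocGeodQuotSet (σ : X → X → ℝ → X) : Set C(ℝ, QuotX G X) :=
  projComp G '' SigmaGeodLines σ

end Proj

/-- Translation of `ℝ` by `c`, as a continuous map. -/
def trCM (c : ℝ) : C(ℝ, ℝ) := ⟨fun t => t + c, continuous_add_right c⟩

/-- The reparametrization flow `Φ_c γ = γ(· + c)`. -/
def shiftCM {Y : Type*} [TopologicalSpace Y] (c : ℝ) (γ : C(ℝ, Y)) : C(ℝ, Y) := γ.comp (trCM c)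

lemma shift_sigma {σ : X → X → ℝ → X} (c : ℝ) {γ : ℝ → X} (h : IsSigmaGeodLine σ γ) :
    IsSigmaGeodLine σ fun t => γ (t + c) := by
  constructor
  · exact h.isom.comp (Isometry.of_dist_eq fun a b => dist_add_right a b c)
  · intro s t hst l hl
    have h2 := h.seg (s + c) (t + c) (by linarith) l hl
    calc σ (γ (s + c)) (γ (t + c)) l = γ (s + c + l * (t + c - (s + c))) := h2
    _ = γ (s + l * (t - s) + c) := by ring_nf

section Flow

variable (G : Type*) [Group G] [MulAction G X] [IsIsometricSMul G X]

lemma shift_mem {σ : X → X → ℝ → X} (c : ℝ) {γ : C(ℝ, QuotX G X)}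
    (h : γ ∈ LocGeodQuotSet G σ) : shiftCM c γ ∈ LocGeodQuotSet G σ := by
  obtain ⟨γ', hγ', rfl⟩ := h
  exact ⟨shiftCM c γ', shift_sigma c hγ', ContinuousMap.ext fun t => rfl⟩

/-- The time-one map `Φ₁` of the reparametrization flow on `Loc-Geod_σ(Γ\X)`. -/
def flowOne (σ : X → X → ℝ → X) : ↥(LocGeodQuotSet G σ) → ↥(LocGeodQuotSet G σ) :=
  fun γ => ⟨shiftCM 1 γ.1, shift_mem G 1 γ.2⟩

end Flow

/-- The class `F` of admissible weight functions. -/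
structure AdmissibleF (f : ℝ → ℝ) : Prop where
  cont : Continuous f
  pos : ∀ s, 0 < f s
  symm : ∀ s : ℝ, f (-s) = f s
  integrable : MeasureTheory.Integrable f
  mass : ∫ s, f s = 1
  momentIntegrable : MeasureTheory.Integrable fun s : ℝ => 2 * |s| * f s

/-- The constant `C(f) = ∫ 2|s| f(s) ds`. -/
def Cf (f : ℝ → ℝ) : ℝ := ∫ s : ℝ, 2 * |s| * f s

/-- The distance `f(γ,γ') = ∫ d(γ(s),γ'(s)) f(s) ds` on spaces of (local) geodesics. -/
def fDist (f : ℝ → ℝ) {Y : Type*} [PseudoMetricSpace Y] (γ γ' : C(ℝ, Y)) : ℝ :=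
  ∫ s : ℝ, dist (γ s) (γ' s) * f s

section Dynamics

variable {Y : Type*}

/-- The dynamical distance `d^n(y,y') = max_{0 ≤ i ≤ n-1} d(T^i y, T^i y')`. -/
def dynDist (d : Y → Y → ℝ) (T : Y → Y) (n : ℕ) (a b : Y) : ℝ :=
  ⨆ i : Fin n, d (T^[(i : ℕ)] a) (T^[(i : ℕ)] b)

/-- The dynamical ball `B_{d^n}(a,r)`. -/
def dynBall (d : Y → Y → ℝ) (T : Y → Y) (n : ℕ) (a : Y) (r : ℝ) : Set Y :=
  {b | dynDist d T n a b < r}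

/-- The covering number of `K` at scale `r` with respect to a distance function `d`. -/
def covNum (d : Y → Y → ℝ) (K : Set Y) (r : ℝ) : ℕ :=
  sInf {m : ℕ | ∃ c : Fin m → Y, K ⊆ ⋃ i, {b | d (c i) b < r}}

/-- The Bowen entropy of `K` w.r.t. `d`: `lim_{r→0} limsup_n (1/n) log Cov_{d^n}(K,r)`. -/
def covEntropy (d : Y → Y → ℝ) (T : Y → Y) (K : Set Y) : EReal :=
  ⨆ r : {r : ℝ // 0 < r},
    limsup (fun n : ℕ => ((Real.log (covNum (dynDist d T n) K r.1) / n : ℝ) : EReal)) atTop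

/-- The entropy of (the join of the first `n` iterates of) a finite measurable partition. -/
def partitionEnt [MeasurableSpace Y] (μ : Measure Y) (T : Y → Y) {k : ℕ}
    (P : Fin k → Set Y) (n : ℕ) : ℝ :=
  ∑ a : Fin n → Fin k, Real.negMulLog (μ (⋂ i : Fin n, T^[(i : ℕ)] ⁻¹' P (a i))).toReal

/-- The Kolmogorov–Sinai entropy of `μ`. -/
def ksEntropy [MeasurableSpace Y] (μ : Measure Y) (T : Y → Y) : EReal :=
  ⨆ (k : ℕ) (P : Fin k → Set Y)
    (_ : (∀ i, MeasurableSet (P i)) ∧ Pairwise (Function.onFun Disjoint P) ∧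
      ⋃ i, P i = Set.univ),
    ((liminf (fun n : ℕ => partitionEnt μ T P n / n) atTop : ℝ) : EReal)

/-- `d` is the distance of a metric inducing the topology of `Y`. -/
def InducesTopology [ts : TopologicalSpace Y] (d : Y → Y → ℝ) : Prop :=
  ∃ m : MetricSpace Y, m.toPseudoMetricSpace.toUniformSpace.toTopologicalSpace = ts ∧
    ∀ a b : Y, @dist Y m.toPseudoMetricSpace.toDist a b = d a b

/-- `d` is the distance of a complete metric inducing the topology of `Y`. -/
def InducesTopologyComplete [ts : TopologicalSpace Y] (d : Y → Y → ℝ) : Prop :=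
  ∃ m : MetricSpace Y, m.toPseudoMetricSpace.toUniformSpace.toTopologicalSpace = ts ∧
    (∀ a b : Y, @dist Y m.toPseudoMetricSpace.toDist a b = d a b) ∧
    @CompleteSpace Y m.toPseudoMetricSpace.toUniformSpace

/-- The upper local entropy of `μ` with respect to the distance `d`. -/
def upperLocalEnt [MeasurableSpace Y] (μ : Measure Y) (T : Y → Y) (d : Y → Y → ℝ) : EReal :=
  essSup (fun y : Y =>
    ⨆ r : {r : ℝ // 0 < r},
      limsup (fun n : ℕ =>
        ((-Real.log (μ (dynBall d T n y r.1)).toReal / n : ℝ) : EReal)) atTop) μ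

/-- The lower local entropy of `μ` with respect to the distance `d`. -/
def lowerLocalEnt [MeasurableSpace Y] (μ : Measure Y) (T : Y → Y) (d : Y → Y → ℝ) : EReal :=
  essInf (fun y : Y =>
    ⨆ r : {r : ℝ // 0 < r},
      liminf (fun n : ℕ =>
        ((-Real.log (μ (dynBall d T n y r.1)).toReal / n : ℝ) : EReal)) atTop) μ

/-- The ergodic invariant probability measures of `(Y,T)`. -/
def ErgProb [MeasurableSpace Y] (T : Y → Y) :=
  {μ : Measure Y // IsProbabilityMeasure μ ∧ Ergodic T μ}

/-- The topological entropy, defined as the supremum of the Kolmogorov–Sinai entropies of the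
ergodic invariant probability measures. -/
def topEnt [MeasurableSpace Y] (T : Y → Y) : EReal :=
  ⨆ μ : ErgProb T, ksEntropy μ.1 T

/-- The upper local entropy of the system: `sup_μ inf_d` of the upper local entropies. -/
def upperLocalEntSys [TopologicalSpace Y] [MeasurableSpace Y] (T : Y → Y) : EReal :=
  ⨆ μ : ErgProb T, ⨅ d : {d : Y → Y → ℝ // InducesTopologyComplete d},
    upperLocalEnt μ.1 T d.1

/-- The lower local entropy of the system: `sup_μ inf_d` of the lower local entropies. -/
def lowerLocalEntSys [TopologicalSpace Y] [MeasurableSpace Y] (T : Y → Y) : EReal :=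
  ⨆ μ : ErgProb T, ⨅ d : {d : Y → Y → ℝ // InducesTopologyComplete d},
    lowerLocalEnt μ.1 T d.1

/-- The invariant topological entropy: in the Bowen formula the supremum is restricted to the
compact `T`-invariant subsets. -/
def invTopEnt [TopologicalSpace Y] (T : Y → Y) : EReal :=
  ⨅ d : {d : Y → Y → ℝ // InducesTopology d},
    ⨆ K : {K : Set Y // IsCompact K ∧ T '' K = K}, covEntropy d.1 T K.1

end Dynamics

end Paper

/-!
Nearest orbit points realise the quotient distance, and `d(x, y) = d(π x, π y)` as soon as
`d(x, y) + d(π x, π y)` is below the minimal displacement `injRad x` of `x` by nontrivial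
elements. Along a compact interval this displacement is bounded below, so by continuity
two lifts which start close keep realising the quotient distance. Hence lifts of projected
`σ`-geodesics converging uniformly on compacts, normalised at time `0`, converge pointwise in `X`,
and by convexity of `σ` the limit is a `σ`-geodesic: `Loc-Geod_σ(Γ\X)` is closed. For
`1`-Lipschitz curves the `f`-distance controls the distance on compacts and is continuous by
dominated convergence, so completeness follows from that of `C(ℝ, Γ\X)`.
-/

namespace Paper

variable {X : Type*} [MetricSpace X] {G : Type*} [Group G] [MulAction G X]

section Quotient

lemma projQ_out (a : QuotX G X) : projQ G (Quotient.out a) = a := Quotient.out_eq a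

lemma projQ_smul (g : G) (x : X) : projQ G (g • x) = projQ G x :=
  Quotient.sound ((MulAction.orbitRel_apply (G := G)).mpr (MulAction.mem_orbit x g))

lemma exists_smul_eq_out (x : X) : ∃ g : G, g • x = Quotient.out (projQ G x) :=
  MulAction.mem_orbit_iff.mp
    ((MulAction.orbitRel_apply (G := G)).mp (Quotient.mk_out (s := MulAction.orbitRel G X) x))

variable [IsIsometricSMul G X]

lemma dist_projQ (x y : X) : dist (projQ G x) (projQ G y) = ⨅ g : G, dist x (g • y) := by
  obtain ⟨k, hk⟩ := exists_smul_eq_out (G := G) x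
  obtain ⟨l, hl⟩ := exists_smul_eq_out (G := G) y
  change ⨅ g : G, dist (Quotient.out (projQ G x)) (g • Quotient.out (projQ G y)) = _
  rw [← hk, ← hl]
  refine le_antisymm (le_ciInf fun g => ?_) (le_ciInf fun g => ?_)
  · refine (ciInf_le (bddb G _ _) (k * g * l⁻¹)).trans_eq ?_
    rw [smul_smul, inv_mul_cancel_right, mul_smul, dist_smul]
  · refine (ciInf_le (bddb G _ _) (k⁻¹ * g * l)).trans_eq ?_
    rw [show g • l • y = k • (k⁻¹ * g * l) • y by rw [smul_smul, smul_smul]; group, dist_smul]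

variable (G) in
lemma lipschitzWith_projQ : LipschitzWith 1 (projQ G : X → QuotX G X) :=
  LipschitzWith.of_dist_le_mul fun x y => by simpa using projQ_dist_le G x y

lemma exists_smul_dist_eq_dist_projQ (hdisc : DiscreteAction G X) (x y : X) :
    ∃ g : G, dist x (g • y) = dist (projQ G x) (projQ G y) := by
  have hfin : {g : G | dist x (g • y) ≤ dist x y}.Finite :=
    (hdisc y (2 * dist x y)).subset fun g (hg : dist x (g • y) ≤ dist x y) =>
      show dist y (g • y) ≤ 2 * dist x y by linarith [dist_triangle_left y (g • y) x]
  obtain ⟨g, hg, hmin⟩ := Set.exists_min_image _ (fun g => dist x (g • y)) hfin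
    ⟨1, by simp⟩
  have hmin' : ∀ g' : G, dist x (g • y) ≤ dist x (g' • y) := fun g' =>
    (le_or_gt (dist x (g' • y)) (dist x y)).elim (hmin g') fun h => hg.trans h.le
  exact ⟨g, by rw [dist_projQ]; exact le_antisymm (le_ciInf hmin') (ciInf_le (bddb G x y) g)⟩

lemma exists_projQ_eq_dist_eq (hdisc : DiscreteAction G X) (x : X) (a : QuotX G X) :
    ∃ y : X, projQ G y = a ∧ dist x y = dist (projQ G x) a := by
  obtain ⟨g, hg⟩ := exists_smul_dist_eq_dist_projQ hdisc x (Quotient.out a)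
  exact ⟨g • Quotient.out a, by rw [projQ_smul, projQ_out], by rw [hg, projQ_out]⟩

lemma t0Space_quotX (hdisc : DiscreteAction G X) : T0Space (QuotX G X) := by
  refine ⟨fun a b hab => ?_⟩
  obtain ⟨g, hg⟩ := exists_smul_dist_eq_dist_projQ hdisc (Quotient.out a) (Quotient.out b)
  rw [projQ_out, projQ_out, Metric.inseparable_iff.mp hab, dist_eq_zero] at hg
  rw [← projQ_out a, ← projQ_out b, hg, projQ_smul]

lemma exists_seq_lift (hdisc : DiscreteAction G X) (u : ℕ → QuotX G X) :
    ∃ x : ℕ → X, (∀ n, projQ G (x n) = u n) ∧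
      ∀ n, dist (x n) (x (n + 1)) = dist (u n) (u (n + 1)) := by
  choose L hLproj hLdist using exists_projQ_eq_dist_eq hdisc
  let x : ℕ → X := fun n => Nat.rec (Quotient.out (u 0)) (fun n xn => L xn (u (n + 1))) n
  have hx : ∀ n, projQ G (x n) = u n := by
    intro n
    cases n with
    | zero => exact projQ_out (u 0)
    | succ n => exact hLproj _ _
  exact ⟨x, hx, fun n => by rw [← hx n]; exact hLdist _ _⟩

lemma completeSpace_quotX [CompleteSpace X] (hdisc : DiscreteAction G X) :
    CompleteSpace (QuotX G X) := by
  refine Metric.complete_of_convergent_controlled_sequences (fun n => 2 / 2 / 2 ^ n)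
    (fun n => by positivity) fun u hu => ?_
  obtain ⟨x, hxproj, hxdist⟩ := exists_seq_lift hdisc u
  obtain ⟨p, hp⟩ := cauchySeq_tendsto_of_complete <| cauchySeq_of_le_geometric_two fun n =>
    (hxdist n).trans_le (hu n n (n + 1) le_rfl n.le_succ).le
  have hconv := ((lipschitzWith_projQ G).continuous.tendsto p).comp hp
  exact ⟨projQ G p, by rwa [show projQ G ∘ x = u from funext hxproj] at hconv⟩

end Quotient

section InjectivityRadius

variable (G) in
/-- A lower bound for the displacement `d(x, g x)` of the nontrivial `g`. The cap at `1` keeps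
the set finite for a discrete action and nonempty when `G` is trivial (`sInf ∅ = 0`). -/
def injRad (x : X) : ℝ :=
  sInf (insert 1 {d : ℝ | (∃ g : G, g ≠ 1 ∧ dist x (g • x) = d) ∧ d ≤ 1})

lemma bddBelow_injRadSet (x : X) :
    BddBelow (insert 1 {d : ℝ | (∃ g : G, g ≠ 1 ∧ dist x (g • x) = d) ∧ d ≤ 1}) := by
  refine ⟨0, ?_⟩
  rintro d (rfl | ⟨⟨g, -, rfl⟩, -⟩)
  exacts [zero_le_one, dist_nonneg]

lemma injRad_le_one (x : X) : injRad G x ≤ 1 :=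
  csInf_le (bddBelow_injRadSet x) (Set.mem_insert _ _)

lemma injRad_le_dist {g : G} (hg : g ≠ 1) (x : X) : injRad G x ≤ dist x (g • x) := by
  by_cases h : dist x (g • x) ≤ 1
  · exact csInf_le (bddBelow_injRadSet x) (Set.mem_insert_of_mem _ ⟨⟨g, hg, rfl⟩, h⟩)
  · exact (injRad_le_one x).trans (le_of_not_ge h)

lemma le_injRad {x : X} {ρ : ℝ} (h₁ : ρ ≤ 1) (h : ∀ g : G, g ≠ 1 → ρ ≤ dist x (g • x)) :
    ρ ≤ injRad G x := by
  refine le_csInf ⟨1, Set.mem_insert _ _⟩ ?_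
  rintro d (rfl | ⟨⟨g, hg, rfl⟩, -⟩)
  exacts [h₁, h g hg]

lemma injRad_pos (hdisc : DiscreteAction G X) (hfree : FreeAction G X) (x : X) :
    0 < injRad G x := by
  have hfin : (insert 1 {d : ℝ | (∃ g : G, g ≠ 1 ∧ dist x (g • x) = d) ∧ d ≤ 1}).Finite := by
    refine (((hdisc x 1).image fun g => dist x (g • x)).subset ?_).insert 1
    rintro d ⟨⟨g, -, rfl⟩, hd⟩
    exact ⟨g, hd, rfl⟩
  rcases Set.Nonempty.csInf_mem ⟨1, Set.mem_insert _ _⟩ hfin with h | ⟨⟨g, hg, hd⟩, -⟩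
  · rw [injRad, h]
    exact one_pos
  · rw [injRad, ← hd]
    exact dist_pos.mpr fun hx => hg (hfree g x hx.symm)

variable [IsIsometricSMul G X]

lemma injRad_le_injRad_smul (g : G) (x : X) : injRad G x ≤ injRad G (g • x) := by
  refine le_injRad (injRad_le_one x) fun h hh => ?_
  have hconj : g⁻¹ * h * g ≠ 1 := by
    rwa [Ne, mul_assoc, inv_mul_eq_one, eq_comm, mul_eq_right]
  rw [← dist_smul g⁻¹, inv_smul_smul, smul_smul, smul_smul]
  exact injRad_le_dist hconj x

lemma injRad_smul (g : G) (x : X) : injRad G (g • x) = injRad G x :=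
  le_antisymm (by simpa using injRad_le_injRad_smul g⁻¹ (g • x)) (injRad_le_injRad_smul g x)

lemma injRad_le_injRad_add (x y : X) : injRad G x ≤ injRad G y + 2 * dist x y := by
  rw [← sub_le_iff_le_add]
  refine le_injRad (by linarith [injRad_le_one (G := G) x, dist_nonneg (x := x) (y := y)])
    fun g hg => ?_
  have := dist_triangle4 x y (g • y) (g • x)
  rw [dist_smul, dist_comm y x] at this
  linarith [injRad_le_dist hg x]

variable (G) in
def injRadQ (a : QuotX G X) : ℝ := injRad G (Quotient.out a)

lemma injRadQ_projQ (x : X) : injRadQ G (projQ G x) = injRad G x := by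
  obtain ⟨k, hk⟩ := exists_smul_eq_out (G := G) x
  rw [injRadQ, ← hk, injRad_smul]

lemma lipschitzWith_injRadQ (hdisc : DiscreteAction G X) :
    LipschitzWith 2 (injRadQ G (X := X)) := by
  refine LipschitzWith.of_le_add_mul 2 fun a b => ?_
  obtain ⟨g, hg⟩ := exists_smul_dist_eq_dist_projQ hdisc (Quotient.out a) (Quotient.out b)
  rw [projQ_out, projQ_out] at hg
  have := injRad_le_injRad_add (G := G) (Quotient.out a) (g • Quotient.out b)
  rwa [injRad_smul, hg] at this

end InjectivityRadius

section Rigidity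

variable [IsIsometricSMul G X]

lemma dist_eq_dist_projQ_of_lt (hdisc : DiscreteAction G X) {x y : X}
    (h : dist x y + dist (projQ G x) (projQ G y) < injRad G x) :
    dist x y = dist (projQ G x) (projQ G y) := by
  obtain ⟨g, hg⟩ := exists_smul_dist_eq_dist_projQ hdisc x y
  rcases eq_or_ne g 1 with rfl | hg1
  · rwa [one_smul] at hg
  · have := dist_triangle x (g • y) (g • x)
    rw [dist_smul, dist_comm y x, hg] at this
    linarith [injRad_le_dist hg1 x]

/-- By `dist_eq_dist_projQ_of_lt`, the continuous function `t ↦ d(α t, β t)` never takes the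
value `ρ / 3` on `S`; starting below it at `t₀`, it stays below it on the preconnected set `S`. -/
lemma dist_eq_dist_projQ_on (hdisc : DiscreteAction G X) {T : Type*} [TopologicalSpace T]
    {S : Set T} (hS : IsPreconnected S) {α β : T → X} (hα : Continuous α) (hβ : Continuous β)
    {ρ : ℝ} (hρ : ∀ t ∈ S, ρ ≤ injRad G (α t))
    (hq : ∀ t ∈ S, dist (projQ G (α t)) (projQ G (β t)) < ρ / 4)
    {t₀ : T} (ht₀ : t₀ ∈ S) (h₀ : dist (α t₀) (β t₀) < ρ / 4) :
    ∀ t ∈ S, dist (α t) (β t) = dist (projQ G (α t)) (projQ G (β t)) := by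
  have hρpos : 0 < ρ := by linarith [dist_nonneg (x := α t₀) (y := β t₀)]
  have hsmall : ∀ t ∈ S, dist (α t) (β t) < ρ / 3 := by
    by_contra! ⟨t₁, ht₁, hge⟩
    obtain ⟨s, hs, hs_eq⟩ := hS.intermediate_value ht₀ ht₁ (hα.dist hβ).continuousOn
      (⟨by linarith, hge⟩ : ρ / 3 ∈ Set.Icc (dist (α t₀) (β t₀)) (dist (α t₁) (β t₁)))
    have := dist_eq_dist_projQ_of_lt hdisc (x := α s) (y := β s)
      (by linarith [hq s hs, hρ s hs, hs_eq])
    linarith [hq s hs, hs_eq]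
  exact fun t ht => dist_eq_dist_projQ_of_lt hdisc (by linarith [hsmall t ht, hq t ht, hρ t ht])

end Rigidity

section SigmaGeodLines

variable {σ : X → X → ℝ → X}

lemma IsSigmaGeodLine.smul [IsIsometricSMul G X] (hequiv : SigmaEquivariant G σ) (g : G)
    {γ : ℝ → X} (h : IsSigmaGeodLine σ γ) : IsSigmaGeodLine σ fun t => g • γ t where
  isom := Isometry.of_dist_eq fun s t => by rw [dist_smul, h.isom.dist_eq]
  seg s t hst l hl := by rw [← hequiv g (γ s) (γ t) l hl, h.seg s t hst l hl]

lemma IsGCB.dist_le (hGCB : IsGCB σ) (x y x' y' : X) {l : ℝ} (hl : l ∈ Set.Icc (0 : ℝ) 1) :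
    dist (σ x y l) (σ x' y' l) ≤ (1 - l) * dist x x' + l * dist y y' := by
  have h := (hGCB.convex x y x' y').2 (Set.left_mem_Icc.mpr zero_le_one)
    (Set.right_mem_Icc.mpr zero_le_one) (by linarith [hl.2] : (0 : ℝ) ≤ 1 - l) hl.1 (by ring)
  simp only [smul_eq_mul, mul_zero, mul_one, zero_add, hGCB.source, hGCB.target] at h
  exact h

lemma IsSigmaGeodLine.of_tendsto (hGCB : IsGCB σ) {ι : Type*} {p : Filter ι} [p.NeBot]
    {γ : ι → ℝ → X} (hγ : ∀ i, IsSigmaGeodLine σ (γ i)) {γ₀ : ℝ → X}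
    (h : ∀ t, Tendsto (fun i => γ i t) p (𝓝 (γ₀ t))) : IsSigmaGeodLine σ γ₀ where
  isom := Isometry.of_dist_eq fun s t =>
    tendsto_nhds_unique ((h s).dist (h t)) (by simp only [(hγ _).isom.dist_eq, tendsto_const_nhds])
  seg s t hst l hl := by
    refine tendsto_nhds_unique ?_ (h (s + l * (t - s)))
    simp only [← (hγ _).seg s t hst l hl]
    refine tendsto_iff_dist_tendsto_zero.mpr (squeeze_zero (fun _ => dist_nonneg)
      (fun i => hGCB.dist_le _ _ _ _ hl) ?_)
    simpa using ((tendsto_iff_dist_tendsto_zero.mp (h s)).const_mul (1 - l)).add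
      ((tendsto_iff_dist_tendsto_zero.mp (h t)).const_mul l)

end SigmaGeodLines

section Closedness

variable [IsIsometricSMul G X] {σ : X → X → ℝ → X}

lemma exists_pos_le_injRadQ_on (hdisc : DiscreteAction G X) (hfree : FreeAction G X)
    {T : Type*} [TopologicalSpace T] {ξ : T → QuotX G X} (hξ : Continuous ξ) {K : Set T}
    (hK : IsCompact K) : ∃ ρ > 0, ∀ t ∈ K, ρ ≤ injRadQ G (ξ t) := by
  rcases K.eq_empty_or_nonempty with rfl | hne
  · exact ⟨1, one_pos, by simp⟩
  obtain ⟨t₀, -, hmin⟩ :=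
    hK.exists_isMinOn hne ((lipschitzWith_injRadQ hdisc).continuous.comp hξ).continuousOn
  exact ⟨injRadQ G (ξ t₀), injRad_pos hdisc hfree _, fun t ht => hmin ht⟩

lemma exists_forall_dist_eq_dist_projQ (hdisc : DiscreteAction G X) (hfree : FreeAction G X)
    {T : Type*} [TopologicalSpace T] {B : ℕ → T → X} (hB : ∀ n, Continuous (B n))
    {ξ : T → QuotX G X} (hξ : Continuous ξ) {K : Set T} (hK : IsCompact K)
    (hKc : IsPreconnected K) (hconv : TendstoUniformlyOn (fun n t => projQ G (B n t)) ξ atTop K)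
    {t₀ : T} (ht₀ : t₀ ∈ K) (hB₀ : CauchySeq fun n => B n t₀) :
    ∃ N, ∀ m ≥ N, ∀ n ≥ N, ∀ t ∈ K,
      dist (B m t) (B n t) = dist (projQ G (B m t)) (projQ G (B n t)) := by
  obtain ⟨ρ, hρ, hρK⟩ := exists_pos_le_injRadQ_on hdisc hfree hξ hK
  obtain ⟨N₁, hN₁⟩ := eventually_atTop.mp
    (Metric.tendstoUniformlyOn_iff.mp hconv (ρ / 16) (by positivity))
  obtain ⟨N₂, hN₂⟩ := Metric.cauchySeq_iff.mp hB₀ (ρ / 8) (by positivity)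
  refine ⟨max N₁ N₂, fun m hm n hn => ?_⟩
  have hm₁ := hN₁ m (le_of_max_le_left hm)
  have hn₁ := hN₁ n (le_of_max_le_left hn)
  refine dist_eq_dist_projQ_on hdisc hKc (hB m) (hB n) (ρ := ρ / 2) (fun t ht => ?_)
    (fun t ht => ?_) ht₀ ?_
  · have := (lipschitzWith_injRadQ hdisc).le_add_mul (ξ t) (projQ G (B m t))
    rw [injRadQ_projQ] at this
    push_cast at this
    linarith [hρK t ht, hm₁ t ht]
  · linarith [dist_triangle_left (projQ G (B m t)) (projQ G (B n t)) (ξ t), hm₁ t ht, hn₁ t ht]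
  · linarith [hN₂ m (le_of_max_le_right hm) n (le_of_max_le_right hn)]

/-- The lifts are normalised at `0` to be nearest to a fixed lift of `ξ 0`; by rigidity
(`exists_forall_dist_eq_dist_projQ`) they are then pointwise Cauchy in `X`. -/
lemma exists_sigmaGeodLine_projQ_eq [CompleteSpace X] (hGCB : IsGCB σ)
    (hdisc : DiscreteAction G X) (hfree : FreeAction G X) (hequiv : SigmaEquivariant G σ)
    {β : ℕ → ℝ → X} (hβ : ∀ n, IsSigmaGeodLine σ (β n)) {ξ : ℝ → QuotX G X}
    (hξ : Continuous ξ)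
    (hconv : ∀ K, IsCompact K → TendstoUniformlyOn (fun n t => projQ G (β n t)) ξ atTop K) :
    ∃ B : ℝ → X, IsSigmaGeodLine σ B ∧ ∀ t, projQ G (B t) = ξ t := by
  have := t0Space_quotX hdisc
  choose g hg using fun n =>
    exists_smul_dist_eq_dist_projQ hdisc (Quotient.out (ξ 0)) (β n 0)
  set B : ℕ → ℝ → X := fun n t => g n • β n t
  have hBline : ∀ n, IsSigmaGeodLine σ (B n) := fun n => (hβ n).smul hequiv (g n)
  have hBconv : ∀ K, IsCompact K → TendstoUniformlyOn (fun n t => projQ G (B n t)) ξ atTop K :=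
    fun K hK => by simpa only [B, projQ_smul] using hconv K hK
  have hB₀ : Tendsto (fun n => B n 0) atTop (𝓝 (Quotient.out (ξ 0))) := by
    have hq₀ := tendsto_iff_dist_tendsto_zero.mp ((hconv {0} isCompact_singleton).tendsto_at rfl)
    refine tendsto_iff_dist_tendsto_zero.mpr (hq₀.congr fun n => ?_)
    rw [dist_comm (B n 0), hg, projQ_out, dist_comm]
  have hcauchy : ∀ t, CauchySeq fun n => B n t := by
    intro t
    have hK : IsCompact (Set.Icc (-|t|) |t|) := isCompact_Icc
    have ht : t ∈ Set.Icc (-|t|) |t| := abs_le.mp le_rfl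
    obtain ⟨N, hN⟩ := exists_forall_dist_eq_dist_projQ hdisc hfree
      (fun n => (hBline n).isom.continuous) hξ hK isPreconnected_Icc (hBconv _ hK)
      (by simp) hB₀.cauchySeq
    refine Metric.cauchySeq_iff.mpr fun ε hε => ?_
    obtain ⟨N', hN'⟩ :=
      Metric.cauchySeq_iff.mp ((hBconv _ hK).tendsto_at ht).cauchySeq ε hε
    exact ⟨max N N', fun m hm n hn => (hN m (le_of_max_le_left hm) n (le_of_max_le_left hn) t ht)
      ▸ hN' m (le_of_max_le_right hm) n (le_of_max_le_right hn)⟩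
  choose B₀ hB₀ using fun t => cauchySeq_tendsto_of_complete (hcauchy t)
  refine ⟨B₀, IsSigmaGeodLine.of_tendsto hGCB hBline hB₀, fun t => tendsto_nhds_unique ?_
    ((hBconv {t} isCompact_singleton).tendsto_at rfl)⟩
  exact ((lipschitzWith_projQ G).continuous.tendsto _).comp (hB₀ t)

lemma lipschitzWith_one_of_mem_locGeodQuotSet {γ : C(ℝ, QuotX G X)}
    (hγ : γ ∈ LocGeodQuotSet G σ) : LipschitzWith 1 γ := by
  obtain ⟨β, hβ, rfl⟩ := hγ
  exact (by simpa using (lipschitzWith_projQ G).comp hβ.isom.lipschitz :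
    LipschitzWith 1 (projQ G ∘ β))

theorem isClosed_locGeodQuotSet [CompleteSpace X] (hGCB : IsGCB σ) (hdisc : DiscreteAction G X)
    (hfree : FreeAction G X) (hequiv : SigmaEquivariant G σ) :
    IsClosed (LocGeodQuotSet G σ) := by
  refine IsSeqClosed.isClosed fun u ξ hu hlim => ?_
  choose β hβ hβu using hu
  obtain rfl : (fun n => projComp G (β n)) = u := funext hβu
  rw [ContinuousMap.tendsto_iff_forall_isCompact_tendstoUniformlyOn] at hlim
  obtain ⟨B, hB, hBξ⟩ := exists_sigmaGeodLine_projQ_eq hGCB hdisc hfree hequiv hβ ξ.continuous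
    hlim
  exact ⟨⟨B, hB.isom.continuous⟩, hB, ContinuousMap.ext hBξ⟩

end Closedness

section FDist

variable {Y : Type*} [PseudoMetricSpace Y] {f : ℝ → ℝ}

lemma dist_mul_le_of_lipschitzWith (hf : AdmissibleF f) {u v : C(ℝ, Y)} (hu : LipschitzWith 1 u)
    (hv : LipschitzWith 1 v) {C : ℝ} (hC : dist (u 0) (v 0) ≤ C) (s : ℝ) :
    dist (u s) (v s) * f s ≤ C * f s + 2 * |s| * f s := by
  have h₁ := hu.dist_le_mul s 0
  have h₂ := hv.dist_le_mul 0 s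
  simp only [NNReal.coe_one, one_mul, Real.dist_eq, sub_zero, zero_sub, abs_neg] at h₁ h₂
  have := dist_triangle4 (u s) (u 0) (v 0) (v s)
  nlinarith [hf.pos s]

lemma integrable_dist_mul (hf : AdmissibleF f) {u v : C(ℝ, Y)} (hu : LipschitzWith 1 u)
    (hv : LipschitzWith 1 v) : Integrable fun s => dist (u s) (v s) * f s :=
  Integrable.mono' ((hf.integrable.const_mul _).add hf.momentIntegrable)
    ((u.continuous.dist v.continuous).mul hf.cont).aestronglyMeasurable
    (Eventually.of_forall fun s => by
      rw [Real.norm_of_nonneg (mul_nonneg dist_nonneg (hf.pos s).le)]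
      exact dist_mul_le_of_lipschitzWith hf hu hv le_rfl s)

/-- On `[t - D/4, t + D/4]`, where `D = min (d(u t, v t)) 1`, the integrand of `fDist` is at
least `D/2` times the minimum `c` of `f` on `[-|R|-1, |R|+1]`, so `fDist f u v ≥ c D² / 4`. -/
lemma exists_pos_mul_sq_le_fDist (hf : AdmissibleF f) (R : ℝ) :
    ∃ c > 0, ∀ u v : C(ℝ, Y), LipschitzWith 1 u → LipschitzWith 1 v → ∀ t, |t| ≤ R →
      c * min (dist (u t) (v t)) 1 ^ 2 ≤ fDist f u v := by
  obtain ⟨x₀, -, hx₀⟩ := isCompact_Icc.exists_isMinOn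
    (Set.nonempty_Icc.mpr (by linarith [abs_nonneg R] : -(|R| + 1) ≤ |R| + 1))
    hf.cont.continuousOn
  refine ⟨f x₀ / 4, by linarith [hf.pos x₀], fun u v hu hv t ht => ?_⟩
  set D := min (dist (u t) (v t)) 1
  have hD₀ : 0 ≤ D := le_min dist_nonneg zero_le_one
  have hD₁ : D ≤ 1 := min_le_right _ _
  have hDt : D ≤ dist (u t) (v t) := min_le_left _ _
  have hlow : ∀ s ∈ Set.Icc (t - D / 4) (t + D / 4), D / 2 * f x₀ ≤ dist (u s) (v s) * f s := by
    intro s hs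
    have h₁ := hu.dist_le_mul t s
    have h₂ := hv.dist_le_mul s t
    simp only [NNReal.coe_one, one_mul, Real.dist_eq] at h₁ h₂
    rw [abs_sub_comm] at h₂
    have hst : |t - s| ≤ D / 4 := abs_le.mpr ⟨by linarith [hs.2], by linarith [hs.1]⟩
    have hsR : |s| ≤ |R| + 1 := by
      linarith [abs_sub_abs_le_abs_sub s t, abs_sub_comm s t, le_abs_self R]
    have hds : D / 2 ≤ dist (u s) (v s) := by linarith [dist_triangle4 (u t) (u s) (v s) (v t)]
    exact mul_le_mul hds (hx₀ (abs_le.mp hsR)) (hf.pos x₀).le dist_nonneg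
  have hset := setIntegral_ge_of_const_le measurableSet_Icc measure_Icc_lt_top.ne hlow
    (integrable_dist_mul hf hu hv).integrableOn
  rw [Real.volume_real_Icc_of_le (by linarith), smul_eq_mul] at hset
  calc f x₀ / 4 * D ^ 2 = (t + D / 4 - (t - D / 4)) * (D / 2 * f x₀) := by ring
    _ ≤ _ := hset
    _ ≤ fDist f u v := setIntegral_le_integral (integrable_dist_mul hf hu hv)
        (Eventually.of_forall fun s => mul_nonneg dist_nonneg (hf.pos s).le)

lemma cauchySeq_of_fDist (hf : AdmissibleF f) {u : ℕ → C(ℝ, Y)}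
    (hu : ∀ n, LipschitzWith 1 (u n))
    (h : ∀ ε : ℝ, 0 < ε → ∃ N : ℕ, ∀ m ≥ N, ∀ n ≥ N, fDist f (u m) (u n) < ε) :
    CauchySeq u := by
  refine ContinuousMap.hasBasis_compactConvergenceUniformity.cauchySeq_iff.mpr ?_
  rintro ⟨K, V⟩ ⟨hK, hV⟩
  obtain ⟨ε, hε, hεV⟩ := Metric.mem_uniformity_dist.mp hV
  obtain ⟨R, hR⟩ := hK.isBounded.subset_closedBall 0
  obtain ⟨c, hc, hcf⟩ := exists_pos_mul_sq_le_fDist (Y := Y) hf R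
  obtain ⟨N, hN⟩ := h (c * min ε 1 ^ 2) (by positivity)
  refine ⟨N, fun m hm n hn t ht => hεV (not_le.mp fun hle => ?_)⟩
  have hmin : min ε 1 ≤ min (dist (u m t) (u n t)) 1 := min_le_min_right 1 hle
  have := hcf (u m) (u n) (hu m) (hu n) t (by simpa using hR ht)
  have := hN m hm n hn
  nlinarith [pow_le_pow_left₀ (le_min hε.le zero_le_one) hmin 2]

lemma tendsto_fDist_of_tendsto (hf : AdmissibleF f) {u : ℕ → C(ℝ, Y)} {γ : C(ℝ, Y)}
    (hu : ∀ n, LipschitzWith 1 (u n)) (hγ : LipschitzWith 1 γ) (h : Tendsto u atTop (𝓝 γ)) :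
    Tendsto (fun n => fDist f (u n) γ) atTop (𝓝 0) := by
  have hpt : ∀ s, Tendsto (fun n => dist (u n s) (γ s)) atTop (𝓝 0) := fun s =>
    tendsto_iff_dist_tendsto_zero.mp (((continuous_eval_const s).tendsto γ).comp h)
  obtain ⟨C, hC⟩ := (hpt 0).bddAbove_range
  simpa only [fDist, integral_zero] using tendsto_integral_of_dominated_convergence
    (F := fun n s => dist (u n s) (γ s) * f s) (f := fun _ => 0) (fun s => C * f s + 2 * |s| * f s)
    (fun n => ((u n).continuous.dist γ.continuous |>.mul hf.cont).aestronglyMeasurable)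
    ((hf.integrable.const_mul C).add hf.momentIntegrable)
    (fun n => Eventually.of_forall fun s => by
      rw [Real.norm_of_nonneg (mul_nonneg dist_nonneg (hf.pos s).le)]
      exact dist_mul_le_of_lipschitzWith hf (hu n) hγ (hC ⟨n, rfl⟩) s)
    (Eventually.of_forall fun s => by simpa using (hpt s).mul_const (f s))

end FDist

end Paper

open Paper in
/-- Let `(X,σ)` be a GCB-space and `Γ = G` a group of `σ`-isometries acting
discretely and freely. Then, for every admissible `f ∈ F`, the metric induced by `f` on
`Loc-Geod_σ(Γ\X)` is complete; moreover `Loc-Geod_σ(Γ\X)` is closed in `Loc-Geod(Γ\X)`. -/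
theorem statement_13 {X : Type*} [MetricSpace X] [CompleteSpace X]
    (σ : X → X → ℝ → X) (hGCB : IsGCB σ)
    (G : Type*) [Group G] [MulAction G X] [IsIsometricSMul G X]
    (hdisc : DiscreteAction G X) (hfree : FreeAction G X)
    (hequiv : SigmaEquivariant G σ)
    (f : ℝ → ℝ) (hf : AdmissibleF f) :
    (∀ u : ℕ → C(ℝ, QuotX G X), (∀ n, u n ∈ LocGeodQuotSet G σ) →
      (∀ ε : ℝ, 0 < ε → ∃ N : ℕ, ∀ m ≥ N, ∀ n ≥ N, fDist f (u m) (u n) < ε) →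
      ∃ γ ∈ LocGeodQuotSet G σ, Tendsto (fun n => fDist f (u n) γ) atTop (nhds 0)) ∧
    IsClosed (Subtype.val ⁻¹' LocGeodQuotSet G σ : Set ↥(LocGeodSet (QuotX G X))) := by
  have hclosed := isClosed_locGeodQuotSet hGCB hdisc hfree hequiv
  refine ⟨fun u hu hcauchy => ?_, hclosed.preimage continuous_subtype_val⟩
  have := completeSpace_quotX hdisc
  have hlip := fun n => lipschitzWith_one_of_mem_locGeodQuotSet (hu n)
  obtain ⟨γ, hγ⟩ := cauchySeq_tendsto_of_complete (cauchySeq_of_fDist hf hlip hcauchy)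
  have hγmem := hclosed.mem_of_tendsto hγ (Eventually.of_forall hu)
  exact ⟨γ, hγmem,
    tendsto_fDist_of_tendsto hf hlip (lipschitzWith_one_of_mem_locGeodQuotSet hγmem) hγ⟩
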